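/- Modus ponens: for events A, C with P(A) > 0, the conjunction satisfies ⟦(C|A)∧(A|Ω)⟧(ω) = 1_{A∩C}(ω) for every ω ∈ Ω; moreover, if P(A∩C) > 0, then the iterated conditional of C|Ω given the conditional event (A∩C)|Ω satisfies ⟦(C|Ω)|((A∩C)|Ω)⟧(ω) = 1 for every ω ∈ Ω. -/

import Mathlib

open MeasureTheory Set
open scoped Classical

noncomputable section

variable {Ω : Type*} [MeasurableSpace Ω]

/-- Indicator (with values in `ℝ`) of a set. -/
def ind (A : Set Ω) : Ω → ℝ := A.indicator 1

/-- Conditional probability `P(A|H) = P(A ∩ H)/P(H)`. -/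
def condProb (P : Measure Ω) (A H : Set Ω) : ℝ :=
  (P (A ∩ H)).toReal / (P H).toReal

/-- The (indicator of the) conditional event `A|H`,
`⟦A|H⟧ = 1_{A∩H} + P(A|H)·1_{Hᶜ}`. -/
def condEvent (P : Measure Ω) (A H : Set Ω) : Ω → ℝ :=
  fun ω => ind (A ∩ H) ω + condProb P A H * ind Hᶜ ω

/-- The prevision `z` of the conjunction `(A|H) ∧ (B|K)`:
`z = E[min(⟦A|H⟧, ⟦B|K⟧)·1_{H∪K}]/P(H∪K)`. -/
def conjPrev (P : Measure Ω) (A H B K : Set Ω) : ℝ :=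
  (∫ ω, min (condEvent P A H ω) (condEvent P B K ω) * ind (H ∪ K) ω ∂P) /
    (P (H ∪ K)).toReal

/-- The conjunction `⟦(A|H) ∧ (B|K)⟧ = min(⟦A|H⟧, ⟦B|K⟧)·1_{H∪K} + z·1_{(H∪K)ᶜ}`. -/
def conjCE (P : Measure Ω) (A H B K : Set Ω) : Ω → ℝ :=
  fun ω => min (condEvent P A H ω) (condEvent P B K ω) * ind (H ∪ K) ω
    + conjPrev P A H B K * ind (H ∪ K)ᶜ ω

/-- The iterated conditional `⟦(B|K)|(A|H)⟧ = ⟦(A|H)∧(B|K)⟧ + μ·(1 − ⟦A|H⟧)`,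
with `μ = z / P(A|H)`. -/
def iterCond (P : Measure Ω) (A H B K : Set Ω) : Ω → ℝ :=
  fun ω => conjCE P A H B K ω +
    (conjPrev P A H B K / condProb P A H) * (1 - condEvent P A H ω)

/-- Goodman–Nguyen logical implication between conditional events:
`A|H ⊑ B|K` iff `A∩H ⊆ B∩K` and `Bᶜ∩K ⊆ Aᶜ∩H`. -/
def GNle (A H B K : Set Ω) : Prop := A ∩ H ⊆ B ∩ K ∧ Bᶜ ∩ K ⊆ Aᶜ ∩ H

/-!
Off `A` the conditional event `C|A` is never negative while `1_A` vanishes, and on `A` it equals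
`1_{C∩A} ≤ 1 = 1_A`, so the minimum in the conjunction is `1_{A∩C}` everywhere. For the second
claim, `(A∩C)|Ω ∧ C|Ω = 1_{A∩C}` has prevision `P(A∩C) = P((A∩C)|Ω)`, so `μ = 1` and the
iterated conditional is `1_{A∩C} + (1 - 1_{A∩C}) = 1`.
-/

theorem ind_of_mem {α : Type*} {S : Set α} {x : α} (h : x ∈ S) : ind S x = 1 :=
  indicator_of_mem h 1

theorem ind_of_notMem {α : Type*} {S : Set α} {x : α} (h : x ∉ S) : ind S x = 0 :=
  indicator_of_notMem h 1

theorem ind_nonneg {α : Type*} (S : Set α) (x : α) : 0 ≤ ind S x :=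
  indicator_nonneg (fun _ _ => zero_le_one) x

theorem ind_le_one {α : Type*} (S : Set α) (x : α) : ind S x ≤ 1 :=
  indicator_le_self' (fun _ _ => zero_le_one) x

theorem min_ind_ind {α : Type*} (S T : Set α) (x : α) :
    min (ind S x) (ind T x) = ind (S ∩ T) x := by
  by_cases hS : x ∈ S <;> by_cases hT : x ∈ T
  · simp [ind_of_mem hS, ind_of_mem hT, ind_of_mem (mem_inter hS hT)]
  · simp [ind_of_mem hS, ind_of_notMem hT, ind_of_notMem fun h : x ∈ S ∩ T => hT h.2]
  · simp [ind_of_notMem hS, ind_of_notMem fun h : x ∈ S ∩ T => hS h.1, ind_nonneg]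
  · simp [ind_of_notMem hS, ind_of_notMem fun h : x ∈ S ∩ T => hS h.1, ind_nonneg]

theorem condProb_nonneg (P : Measure Ω) (A H : Set Ω) : 0 ≤ condProb P A H :=
  div_nonneg ENNReal.toReal_nonneg ENNReal.toReal_nonneg

theorem condProb_univ (P : Measure Ω) [IsProbabilityMeasure P] (A : Set Ω) :
    condProb P A univ = P.real A := by
  simp [condProb, measureReal_def]

theorem condEvent_nonneg (P : Measure Ω) (A H : Set Ω) (ω : Ω) : 0 ≤ condEvent P A H ω :=
  add_nonneg (ind_nonneg _ _) (mul_nonneg (condProb_nonneg P A H) (ind_nonneg _ _))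

theorem condEvent_of_mem {P : Measure Ω} {H : Set Ω} {ω : Ω} (A : Set Ω) (hω : ω ∈ H) :
    condEvent P A H ω = ind (A ∩ H) ω := by
  simp [condEvent, ind_of_notMem (notMem_compl_iff.mpr hω)]

theorem condEvent_univ (P : Measure Ω) (A : Set Ω) : condEvent P A univ = ind A := by
  funext ω
  rw [condEvent_of_mem A (mem_univ ω), inter_univ]

theorem min_condEvent_ind_self (P : Measure Ω) (C A : Set Ω) (ω : Ω) :
    min (condEvent P C A ω) (ind A ω) = ind (A ∩ C) ω := by
  by_cases hω : ω ∈ A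
  · rw [condEvent_of_mem C hω, ind_of_mem hω, min_eq_left (ind_le_one _ _), inter_comm]
  · rw [ind_of_notMem hω, ind_of_notMem fun h : ω ∈ A ∩ C => hω h.1,
      min_eq_right (condEvent_nonneg P C A ω)]

theorem conjCE_of_union_eq_univ (P : Measure Ω) {A H B K : Set Ω} (hHK : H ∪ K = univ)
    (ω : Ω) : conjCE P A H B K ω = min (condEvent P A H ω) (condEvent P B K ω) := by
  simp [conjCE, hHK, ind_of_mem (mem_univ ω), ind_of_notMem (notMem_empty ω)]

theorem conjCE_univ_univ (P : Measure Ω) (A B : Set Ω) :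
    conjCE P A univ B univ = ind (A ∩ B) := by
  funext ω
  rw [conjCE_of_union_eq_univ P (union_self _), condEvent_univ, condEvent_univ, min_ind_ind]

theorem conjPrev_univ_univ (P : Measure Ω) [IsProbabilityMeasure P] {A B : Set Ω}
    (hAB : MeasurableSet (A ∩ B)) : conjPrev P A univ B univ = P.real (A ∩ B) := by
  have hmin : (fun ω => min (condEvent P A univ ω) (condEvent P B univ ω) *
      ind (univ ∪ univ) ω) = ind (A ∩ B) := by
    funext ω
    rw [condEvent_univ, condEvent_univ, min_ind_ind,
      ind_of_mem (S := univ ∪ univ) (Or.inl (mem_univ ω)), mul_one]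
  rw [conjPrev, hmin, ind, integral_indicator_one hAB]
  simp

theorem iterCond_univ_univ_of_subset (P : Measure Ω) [IsProbabilityMeasure P] {A B : Set Ω}
    (hAm : MeasurableSet A) (hAB : A ⊆ B) (hA : 0 < P A) (ω : Ω) :
    iterCond P A univ B univ ω = 1 := by
  have hAB' : A ∩ B = A := inter_eq_left.mpr hAB
  have hPA : P.real A ≠ 0 := (ENNReal.toReal_pos hA.ne' (measure_ne_top P A)).ne'
  simp only [iterCond, conjCE_univ_univ, conjPrev_univ_univ P (hAB'.symm ▸ hAm), condProb_univ,
    condEvent_univ, hAB', div_self hPA]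
  ring

theorem modus_ponens_general (P : Measure Ω) [IsProbabilityMeasure P]
    (A C : Set Ω) (hAm : MeasurableSet A) (hCm : MeasurableSet C) :
    (∀ ω, conjCE P C A A Set.univ ω = ind (A ∩ C) ω) ∧
      (0 < P (A ∩ C) → ∀ ω, iterCond P (A ∩ C) Set.univ C Set.univ ω = 1) := by
  refine ⟨fun ω => ?_, fun hAC => iterCond_univ_univ_of_subset P (hAm.inter hCm)
    inter_subset_right hAC⟩
  rw [conjCE_of_union_eq_univ P (union_univ A), condEvent_univ, min_condEvent_ind_self]

/-- Modus ponens: `⟦(C|A)∧(A|Ω)⟧ = 1_{A∩C}` pointwise; moreover, if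
`P(A∩C) > 0`, then `⟦(C|Ω)|((A∩C)|Ω)⟧` is constantly `1`. -/
theorem modus_ponens (P : Measure Ω) [IsProbabilityMeasure P]
    (A C : Set Ω) (hAm : MeasurableSet A) (hCm : MeasurableSet C)
    (hA : 0 < P A) :
    (∀ ω, conjCE P C A A Set.univ ω = ind (A ∩ C) ω) ∧
      (0 < P (A ∩ C) → ∀ ω, iterCond P (A ∩ C) Set.univ C Set.univ ω = 1) :=
  modus_ponens_general P A C hAm hCm

end
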